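/- arXiv:quant-ph/0403193 — 3 statements merged into one kernel-verified Lean document; each statement's English description precedes it below -/
import Mathlib

section
/- Let |Ψ⟩ be a (not necessarily normalized) vector in a finite-dimensional Hilbert space with a fixed orthonormal basis, let D be the diagonal part of |Ψ⟩⟨Ψ|, and let E be a diagonal projector (E = E² and E diagonal). Then the minimum of Tr(ZD) over real diagonal matrices Z satisfying Z ≥ 2E|Ψ⟩⟨Ψ|E equals 2|⟨Ψ|E|Ψ⟩|², and is attained by Z = 2⟨Ψ|E|Ψ⟩E. -/
open Matrix ComplexOrder

lemma quad_eq {n : Type*} [Fintype n] [DecidableEq n] (d : n → ℝ) (φ x : n → ℂ) :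
    star x ⬝ᵥ ((Matrix.diagonal (fun i => (d i : ℂ)) -
        (2:ℂ) • Matrix.of (fun i j => φ i * star (φ j))) *ᵥ x)
    = ((∑ i, d i * Complex.normSq (x i)
        - 2 * Complex.normSq (∑ i, star (x i) * φ i) : ℝ) : ℂ) := by
  have hT : ((Complex.normSq (∑ i, star (x i) * φ i) : ℝ) : ℂ)
      = (∑ i, star (x i) * φ i) * (∑ j, star (φ j) * x j) := by
    rw [← Complex.mul_conj]
    congr 1
    rw [map_sum]
    exact Finset.sum_congr rfl fun j _ => by
      simp [mul_comm, Complex.star_def]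
  have key : ∀ i, star (x i) * ∑ j, (((if i = j then (d i:ℂ) else 0)
        - 2 * (φ i * star (φ j))) * x j)
      = (d i:ℂ) * (Complex.normSq (x i) : ℂ)
        - (star (x i) * φ i) * (2 * ∑ j, star (φ j) * x j) := by
    intro i
    simp only [sub_mul]
    rw [Finset.sum_sub_distrib]
    have h1 : ∑ j, (if i = j then (d i:ℂ) else 0) * x j = (d i:ℂ) * x i := by
      simp [Finset.sum_ite_eq, ite_mul]
    rw [h1, mul_sub, Finset.mul_sum, Finset.mul_sum]
    have h2 : (star (x i)) * ((d i:ℂ) * x i) = (d i:ℂ) * (Complex.normSq (x i) : ℂ) := by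
      rw [Complex.star_def, mul_left_comm, Complex.normSq_eq_conj_mul_self]
    rw [h2]
    congr 1
    rw [Finset.mul_sum]
    exact Finset.sum_congr rfl fun j _ => by ring
  simp only [dotProduct, mulVec, Matrix.sub_apply, Matrix.smul_apply,
    Matrix.diagonal_apply, Matrix.of_apply, smul_eq_mul]
  calc (∑ i, star (x i) * ∑ j, (((if i = j then (d i:ℂ) else 0)
        - 2 * (φ i * star (φ j))) * x j))
      = ∑ i, ((d i:ℂ) * (Complex.normSq (x i) : ℂ)
          - (star (x i) * φ i) * (2 * ∑ j, star (φ j) * x j)) :=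
        Finset.sum_congr rfl fun i _ => key i
    _ = (∑ i, (d i:ℂ) * (Complex.normSq (x i) : ℂ))
          - (∑ i, star (x i) * φ i) * (2 * ∑ j, star (φ j) * x j) := by
        rw [Finset.sum_sub_distrib, Finset.sum_mul]
    _ = _ := by push_cast [hT]; ring

lemma herm_aux {n : Type*} [Fintype n] [DecidableEq n] (d : n → ℝ) (φ : n → ℂ) :
    (Matrix.diagonal (fun i => (d i : ℂ)) -
      (2:ℂ) • Matrix.of (fun i j => φ i * star (φ j))).IsHermitian := by
  unfold Matrix.IsHermitian
  ext i j
  simp only [Matrix.conjTranspose_apply, Matrix.sub_apply, Matrix.smul_apply,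
    Matrix.diagonal_apply, Matrix.of_apply, smul_eq_mul, star_sub, star_mul',
    star_star, Complex.star_def, _root_.map_mul, map_ofNat, apply_ite, Complex.conj_ofReal, Complex.conj_conj,
    map_zero]
  rcases eq_or_ne i j with h | h
  · subst h; ring_nf
  · simp [h, Ne.symm h]; ring

lemma cs_aux {n : Type*} [Fintype n] (y φ : n → ℂ) :
    Complex.normSq (∑ i, star (y i) * φ i)
      ≤ (∑ i, Complex.normSq (y i)) * (∑ i, Complex.normSq (φ i)) := by
  have h1 : ‖∑ i, star (y i) * φ i‖
      ≤ ∑ i, ‖y i‖ * ‖φ i‖ := by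
    refine (norm_sum_le Finset.univ (fun i => star (y i) * φ i)).trans
      (le_of_eq (Finset.sum_congr rfl fun i _ => ?_))
    simp [Complex.norm_mul]
  have h2 := Finset.sum_mul_sq_le_sq_mul_sq Finset.univ
    (fun i => ‖y i‖) (fun i => ‖φ i‖)
  calc Complex.normSq (∑ i, star (y i) * φ i)
      = ‖∑ i, star (y i) * φ i‖ ^ 2 := (Complex.sq_norm _).symm
    _ ≤ (∑ i, ‖y i‖ * ‖φ i‖) ^ 2 := by
        exact pow_le_pow_left₀ (norm_nonneg _) h1 2
    _ ≤ (∑ i, ‖y i‖ ^ 2) * (∑ i, ‖φ i‖ ^ 2) := h2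
    _ = _ := by simp [Complex.sq_norm]

/-- Let `Ψ` be a (not necessarily normalized) vector in a
finite-dimensional Hilbert space with a fixed orthonormal basis (indexed by `n`),
let `D` be the diagonal part of `|Ψ⟩⟨Ψ|`, and let `E = diagonal e` (with `e i ∈ {0,1}`)
be a diagonal projector.  Then the minimum of `Tr (Z D)` over real diagonal matrices `Z`
satisfying `Z ≥ 2 E |Ψ⟩⟨Ψ| E` equals `2 |⟨Ψ|E|Ψ⟩|²`, and is attained by
`Z = 2 ⟨Ψ|E|Ψ⟩ E`. -/
theorem stmt_0 {n : Type*} [Fintype n] [DecidableEq n]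
    (Ψ : n → ℂ) (e : n → ℝ) (he : ∀ i, e i = 0 ∨ e i = 1)
    (E : Matrix n n ℂ) (hE : E = Matrix.diagonal (fun i => (e i : ℂ)))
    (ψψ : Matrix n n ℂ) (hψψ : ψψ = fun i j => Ψ i * star (Ψ j))
    (c : ℝ) (hc : c = ∑ i, e i * Complex.normSq (Ψ i)) :
    IsLeast
      {t : ℝ | ∃ z : n → ℝ,
        (Matrix.diagonal (fun i => (z i : ℂ)) - (2 : ℂ) • (E * ψψ * E)).PosSemidef ∧
        t = ∑ i, z i * Complex.normSq (Ψ i)}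
      (2 * c ^ 2)
    ∧
    ((Matrix.diagonal (fun i => ((2 * c * e i : ℝ) : ℂ)) -
        (2 : ℂ) • (E * ψψ * E)).PosSemidef ∧
      2 * c ^ 2 = ∑ i, (2 * c * e i) * Complex.normSq (Ψ i)) := by
  set φ : n → ℂ := fun i => (e i : ℂ) * Ψ i with hφ
  have he2 : ∀ i, e i * e i = e i := fun i => by rcases he i with h | h <;> simp [h]
  have hφnorm : ∀ i, Complex.normSq (φ i) = e i * Complex.normSq (Ψ i) := by
    intro i
    rw [hφ]
    simp only [Complex.normSq_mul, Complex.normSq_ofReal]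
    rw [he2]
  have hcφ : ∑ i, Complex.normSq (φ i) = c := by
    rw [hc]; exact Finset.sum_congr rfl fun i _ => hφnorm i
  have hM : E * ψψ * E = Matrix.of (fun i j => φ i * star (φ j)) := by
    subst hE hψψ
    ext i j
    rw [Matrix.mul_diagonal]; erw [Matrix.diagonal_mul]
    show (e i : ℂ) * (Ψ i * star (Ψ j)) * (e j : ℂ) = φ i * star (φ j)
    rw [hφ]
    simp only [star_mul', Complex.star_def, Complex.conj_ofReal]
    ring
  -- the value identity
  have hval : 2 * c ^ 2 = ∑ i, (2 * c * e i) * Complex.normSq (Ψ i) := by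
    have : ∑ i, (2 * c * e i) * Complex.normSq (Ψ i)
        = 2 * c * ∑ i, e i * Complex.normSq (Ψ i) := by
      rw [Finset.mul_sum]
      exact Finset.sum_congr rfl fun i _ => by ring
    rw [this, ← hc]; ring
  -- PSD of the witness
  have hpos : (Matrix.diagonal (fun i => ((2 * c * e i : ℝ) : ℂ)) -
      (2 : ℂ) • (E * ψψ * E)).PosSemidef := by
    rw [hM]
    refine Matrix.PosSemidef.of_dotProduct_mulVec_nonneg (herm_aux _ _) fun x => ?_
    rw [quad_eq, Complex.zero_le_real]
    have hy : (∑ i, star (x i) * φ i) = ∑ i, star ((e i : ℂ) * x i) * φ i := by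
      refine Finset.sum_congr rfl fun i _ => ?_
      rw [hφ]
      rcases he i with h | h <;> simp [h]
    have hcs := cs_aux (fun i => (e i : ℂ) * x i) φ
    have h2 : ∑ i, Complex.normSq ((e i : ℂ) * x i) = ∑ i, e i * Complex.normSq (x i) := by
      refine Finset.sum_congr rfl fun i _ => ?_
      simp only [Complex.normSq_mul, Complex.normSq_ofReal]
      rw [he2]
    rw [h2, hcφ] at hcs
    have h3 : ∑ i, (2 * c * e i) * Complex.normSq (x i)
        = 2 * ((∑ i, e i * Complex.normSq (x i)) * c) := by
      rw [Finset.sum_mul, Finset.mul_sum]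
      exact Finset.sum_congr rfl fun i _ => by ring
    rw [hy, h3]
    linarith
  refine ⟨⟨⟨fun i => 2 * c * e i, hpos, hval⟩, ?_⟩, hpos, hval⟩
  -- lower bound
  rintro t ⟨z, hzpsd, ht⟩
  rw [hM] at hzpsd
  have hnn : ∀ i, e i = 0 → 0 ≤ z i := by
    intro i h0
    have h := hzpsd.dotProduct_mulVec_nonneg (Pi.single i 1)
    rw [quad_eq, Complex.zero_le_real] at h
    have hφ0 : φ i = 0 := by rw [hφ]; simp [h0]
    have e1 : ∑ j, z j * Complex.normSq ((Pi.single i 1 : n → ℂ) j) = z i := by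
      rw [Finset.sum_eq_single i]
      · simp
      · intro j _ hj; simp [Pi.single_apply, hj]
      · simp
    have e2 : (∑ j, star ((Pi.single i 1 : n → ℂ) j) * φ j) = φ i := by
      rw [Finset.sum_eq_single i]
      · simp
      · intro j _ hj; simp [Pi.single_apply, hj]
      · simp
    rw [e1, e2, hφ0] at h
    simpa using h
  have hmain : 2 * c ^ 2 ≤ ∑ i, z i * Complex.normSq (φ i) := by
    have h := hzpsd.dotProduct_mulVec_nonneg φ
    rw [quad_eq, Complex.zero_le_real] at h
    have hT : (∑ i, star (φ i) * φ i) = ((c : ℝ) : ℂ) := by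
      rw [← hcφ]
      push_cast
      exact Finset.sum_congr rfl fun i _ => by
        rw [Complex.star_def, Complex.normSq_eq_conj_mul_self]
    rw [hT] at h
    simp only [Complex.normSq_ofReal] at h
    nlinarith [h]
  have hcmp : ∑ i, z i * Complex.normSq (φ i) ≤ ∑ i, z i * Complex.normSq (Ψ i) := by
    refine Finset.sum_le_sum fun i _ => ?_
    rcases he i with h | h
    · rw [hφnorm i, h]
      simpa using mul_nonneg (hnn i h) (Complex.normSq_nonneg (Ψ i))
    · rw [hφnorm i, h, one_mul]
  rw [ht]
  linarith
end

section
/- Weak duality for the coin-flipping semidefinite program: let ρ₀ be a fixed density matrix and let L_i, R_i (i = 1,…,m) be completely positive trace-preserving linear maps each of which is either the identity, conjugation by a unitary, or a partial trace over one subsystem; set Z_{m+1} = E_B (an orthogonal projector) and R_{m+1} = id. If Hermitian matrices Z₁,…,Z_m satisfy L_i^d(Z_i) ≥ R_{i+1}^d(Z_{i+1}) for all i = 1,…,m (where L^d, R^d are the adjoint maps with respect to the trace inner product), then for any positive semidefinite ρ₁,…,ρ_m satisfying L_i(ρ_i) = R_i(ρ_{i−1}) for all i, one has Tr(E_B ρ_m)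 ≤ Tr(Z₁ R₁(ρ₀)). -/
open Matrix ComplexOrder

private lemma psd_trace_nonneg {n : Type} [Fintype n] [DecidableEq n] {M : Matrix n n ℂ}
    (hM : M.PosSemidef) : 0 ≤ M.trace.re := by
  have h : ∀ i, 0 ≤ (M i i).re := by
    intro i
    have := hM.dotProduct_mulVec_nonneg (Pi.single i 1)
    have h2 : star (Pi.single i 1 : n → ℂ) ⬝ᵥ M *ᵥ Pi.single i 1 = M i i := by
      simp [Matrix.mulVec_single, dotProduct, Pi.single_apply, apply_ite, Finset.sum_ite_eq]
    rw [h2] at this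
    exact (Complex.le_def.mp this).1
  have : 0 ≤ ∑ i, (M i i).re := Finset.sum_nonneg fun i _ => h i
  simpa [Matrix.trace, Matrix.diag, Complex.re_sum] using this

open scoped MatrixOrder in
private lemma psd_mul_trace_nonneg {n : Type} [Fintype n] [DecidableEq n]
    {A B : Matrix n n ℂ} (hA : A.PosSemidef) (hB : B.PosSemidef) :
    0 ≤ (A * B).trace.re := by
  have hs := CFC.sqrt_mul_sqrt_self A hA.nonneg
  have hS : (CFC.sqrt A)ᴴ = CFC.sqrt A := (CFC.sqrt_nonneg A).posSemidef.1
  have key : (A * B).trace = ((CFC.sqrt A)ᴴ * B * CFC.sqrt A).trace := by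
    calc (A * B).trace = (CFC.sqrt A * CFC.sqrt A * B).trace := by rw [hs]
      _ = ((CFC.sqrt A)ᴴ * B * CFC.sqrt A).trace := by
          rw [mul_assoc, Matrix.trace_mul_comm, hS]
  rw [key]
  exact psd_trace_nonneg (hB.conjTranspose_mul_mul_same _)

/-- **weak duality for the coin-flipping SDP.**  Let `ρ 0` be a fixed
density matrix and let `L i` (for `1 ≤ i ≤ m`) and `R i` (here `R i` plays the role
of the paper's `R_{i+1}`, acting on `ρ i`) be completely positive trace-preserving
linear maps (positivity- and trace-preserving), with trace-adjoints `Ld i`, `Rd i`.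
Set `Z_{m+1} = E_B` (an orthogonal projector) and `R_{m+1} = id`.  If the Hermitian
matrices `Z 1, …, Z m` satisfy the dual constraints `Ld i (Z i) ≥ Rd i (Z (i+1))` for
`1 ≤ i < m` and `Ld m (Z m) ≥ E_B`, then for any positive semidefinite `ρ 1, …, ρ m`
satisfying the primal constraints `L (i+1) (ρ (i+1)) = R i (ρ i)` for `i < m`, one has
`Tr (E_B ρ m) ≤ Tr (Z 1 R₁(ρ 0))`. -/
theorem stmt_13
    (m : ℕ) (hm : 1 ≤ m)
    (ι κ : ℕ → Type)
    [∀ i, Fintype (ι i)] [∀ i, DecidableEq (ι i)]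
    [∀ i, Fintype (κ i)] [∀ i, DecidableEq (κ i)]
    (ρ : (i : ℕ) → Matrix (ι i) (ι i) ℂ)
    (L : (i : ℕ) → Matrix (ι i) (ι i) ℂ →ₗ[ℂ] Matrix (κ i) (κ i) ℂ)
    (Ld : (i : ℕ) → Matrix (κ i) (κ i) ℂ →ₗ[ℂ] Matrix (ι i) (ι i) ℂ)
    (R : (i : ℕ) → Matrix (ι i) (ι i) ℂ →ₗ[ℂ] Matrix (κ (i + 1)) (κ (i + 1)) ℂ)
    (Rd : (i : ℕ) → Matrix (κ (i + 1)) (κ (i + 1)) ℂ →ₗ[ℂ] Matrix (ι i) (ι i) ℂ)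
    (Z : (i : ℕ) → Matrix (κ i) (κ i) ℂ)
    (EB : Matrix (ι m) (ι m) ℂ)
    -- the maps are trace-adjoint pairs:
    (hLd : ∀ i A B, (L i A * B).trace = (A * Ld i B).trace)
    (hRd : ∀ i A B, (R i A * B).trace = (A * Rd i B).trace)
    -- the maps are positive and trace-preserving (CPTP):
    (hLpos : ∀ i A, A.PosSemidef → (L i A).PosSemidef)
    (hRpos : ∀ i A, A.PosSemidef → (R i A).PosSemidef)
    (hLtr : ∀ i A, (L i A).trace = A.trace)
    (hRtr : ∀ i A, (R i A).trace = A.trace)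
    -- `E_B` is an orthogonal projector:
    (hEBherm : EB.IsHermitian) (hEBproj : EB * EB = EB)
    -- `ρ 0` is a density matrix and the `ρ i` are positive semidefinite:
    (hρ0 : (ρ 0).PosSemidef ∧ (ρ 0).trace = 1)
    (hρ : ∀ i ≤ m, (ρ i).PosSemidef)
    -- primal constraints `L_i(ρ_i) = R_i(ρ_{i-1})`:
    (hprimal : ∀ i < m, L (i + 1) (ρ (i + 1)) = R i (ρ i))
    -- the `Z i` are Hermitian:
    (hZherm : ∀ i, 1 ≤ i → i ≤ m → (Z i).IsHermitian)
    -- dual constraints `L_i^d(Z_i) ≥ R_{i+1}^d(Z_{i+1})`, with `Z_{m+1} = E_B`: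
    (hdual : ∀ i, 1 ≤ i → i < m → (Ld i (Z i) - Rd i (Z (i + 1))).PosSemidef)
    (hdualm : (Ld m (Z m) - EB).PosSemidef) :
    ((EB * ρ m).trace).re ≤ ((Z 1 * R 0 (ρ 0)).trace).re := by
  -- P i : the telescoping bound down to step i
  set P : ℕ → Prop := fun i => ((EB * ρ m).trace).re ≤ ((ρ i * Ld i (Z i)).trace).re with hP
  have base : P m := by
    have hdiff : 0 ≤ ((ρ m * (Ld m (Z m) - EB)).trace).re :=
      psd_mul_trace_nonneg (hρ m le_rfl) hdualm
    rw [mul_sub, Matrix.trace_sub, Complex.sub_re, sub_nonneg] at hdiff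
    calc ((EB * ρ m).trace).re = ((ρ m * EB).trace).re := by rw [Matrix.trace_mul_comm]
      _ ≤ _ := hdiff
  have step : ∀ i, 1 ≤ i → i < m → P (i + 1) → P i := by
    intro i h1 hlt hPi1
    have e1 : (ρ (i + 1) * Ld (i + 1) (Z (i + 1))).trace
        = (ρ i * Rd i (Z (i + 1))).trace := by
      rw [← hLd (i + 1) (ρ (i + 1)) (Z (i + 1)), hprimal i hlt, hRd]
    have hdiff : 0 ≤ ((ρ i * (Ld i (Z i) - Rd i (Z (i + 1)))).trace).re :=
      psd_mul_trace_nonneg (hρ i hlt.le) (hdual i h1 hlt)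
    rw [mul_sub, Matrix.trace_sub, Complex.sub_re, sub_nonneg] at hdiff
    exact hPi1.trans (e1 ▸ hdiff)
  have main : ∀ d i, 1 ≤ i → i + d = m → P i := by
    intro d
    induction d with
    | zero => intro i h1 he; simpa [← he] using base
    | succ d ih =>
      intro i h1 he
      have hlt : i < m := by omega
      exact step i h1 hlt (ih (i + 1) (by omega) (by omega))
  have h1 : P 1 := main (m - 1) 1 le_rfl (by omega)
  calc ((EB * ρ m).trace).re ≤ ((ρ 1 * Ld 1 (Z 1)).trace).re := h1
    _ = ((Z 1 * R 0 (ρ 0)).trace).re := by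
        rw [← hLd 1 (ρ 1) (Z 1), hprimal 0 hm, Matrix.trace_mul_comm]
end

section
/- For the n=2 protocol under the fairness constraint a₁(1−a₂) = 1/2 with a₁ ∈ [1/2, 1] and a₂ = 1 − 1/(2a₁): the bounds β = 2a₁²(1−a₂) = a₁ and α = 2(a₁a₂² + 1 − a₁) satisfy max(α, β) ≥ 1/√2 for all admissible a₁, with equality (α = β = 1/√2) at a₁ = 1/√2. Hence the minimal bias achievable by this family at n = 2 is 1/√2 − 1/2. -/
/-- For the `n = 2` protocol under the fairness constraint
`a₁(1−a₂) = 1/2` with `a₁ ∈ [1/2, 1]` and `a₂ = 1 − 1/(2a₁)`: the bounds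
`β = 2 (a₁√(1−a₂))² (= a₁)` and `α = 2 (√(a₁a₂² + 1−a₁))² (= 2(a₁a₂² + 1 − a₁))`
satisfy `max(α, β) ≥ 1/√2` for all admissible `a₁`, with equality
(`α = β = 1/√2`) at `a₁ = 1/√2`.  Hence the minimal bias achievable by this family
at `n = 2` is `1/√2 − 1/2`: `max(α,β) − 1/2 ≥ 1/√2 − 1/2`. -/
theorem stmt_17 (a1 a2 α β : ℝ)
    (ha1 : a1 ∈ Set.Icc (1 / 2 : ℝ) 1) (ha2 : a2 = 1 - 1 / (2 * a1))
    (hβ : β = 2 * (a1 * Real.sqrt (1 - a2)) ^ 2)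
    (hα : α = 2 * (Real.sqrt (a1 * a2 ^ 2 + (1 - a1))) ^ 2) :
    max α β ≥ 1 / Real.sqrt 2 ∧
    (a1 = 1 / Real.sqrt 2 → α = 1 / Real.sqrt 2 ∧ β = 1 / Real.sqrt 2) ∧
    max α β - 1 / 2 ≥ 1 / Real.sqrt 2 - 1 / 2 := by
  obtain ⟨h1, h2⟩ := ha1
  have hpos : (0:ℝ) < a1 := by linarith
  have hne : a1 ≠ 0 := ne_of_gt hpos
  have h1a2 : 1 - a2 = 1 / (2 * a1) := by rw [ha2]; ring
  have hβ' : β = a1 := by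
    rw [hβ, mul_pow, Real.sq_sqrt (by rw [h1a2]; positivity)]
    rw [h1a2]; field_simp
  have hin : a1 * a2 ^ 2 + (1 - a1) = 1 / (4 * a1) := by
    rw [ha2]; field_simp; ring
  have hα' : α = 1 / (2 * a1) := by
    rw [hα, Real.sq_sqrt (by rw [hin]; positivity), hin]
    field_simp; ring
  have hs2 : Real.sqrt 2 > 0 := by positivity
  have hs2sq : Real.sqrt 2 ^ 2 = 2 := Real.sq_sqrt (by norm_num)
  have hmax : max α β ≥ 1 / Real.sqrt 2 := by
    rcases le_total a1 (1 / Real.sqrt 2) with h | h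
    · refine le_trans ?_ (le_max_left α β)
      rw [hα']
      rw [div_le_div_iff₀ hs2 (by positivity)]
      have key : Real.sqrt 2 * (1 / Real.sqrt 2) = 1 := by field_simp
      have ha : Real.sqrt 2 * a1 ≤ 1 := by
        calc Real.sqrt 2 * a1 ≤ Real.sqrt 2 * (1 / Real.sqrt 2) :=
              mul_le_mul_of_nonneg_left h hs2.le
          _ = 1 := key
      nlinarith [mul_le_mul_of_nonneg_left ha hs2.le, hs2sq]
    · exact le_trans (by rw [hβ']; exact h) (le_max_right α β)
  refine ⟨hmax, ?_, by linarith⟩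
  intro heq
  have h2s : Real.sqrt 2 * Real.sqrt 2 = 2 := Real.mul_self_sqrt (by norm_num)
  constructor
  · rw [hα', heq]
    rw [show (2:ℝ) * (1 / Real.sqrt 2) = Real.sqrt 2 from by
      field_simp; exact hs2sq.symm]
  · rw [hβ', heq]
end
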